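/- Assume s ≤ h, let B be a real number with 0 < B ≤ w·h², let δ ∈ (0, 1/4), and let x_min = min{c(i,j) : c(i,j) > 0}. Let OPT = max over column-s-sparse supports Ω with EMD[Ω] ≤ B of Φ[Ω], and assume OPT ≥ x_min. Let 0 ≤ r ≤ l be reals with l − r ≤ δ·x_min/(w·h²). Suppose: (i) Ω_l is a column-s-sparse support maximizing Φ[Ω] − l·EMD[Ω] over all column-s-sparse supports, with EMD[Ω_l] ≤ B; (ii) Ω_r is a column-s-sparse support maximizing Φ[Ω] − r·EMD[Ω] over all column-s-sparse supports, with EMD[Ω_r] ≥ B; (iii) Ω'_r is a column-s-sparse support with EMD[Ω'_r] ≤ B and Φ[Ω'_r] ≥ Φ[Ω_r]/(2(⌊EMD[Ω_r]/B⌋ + 1)). Then max{Φ[Ω'_r], Φ[Ω_l]} ≥ (1/4 − δ)·OPT. -/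

import Mathlib

/-- `EMD(A, B)` for two finite sets of naturals: the minimum over bijections `π : A → B` of
`∑_{a ∈ A} |a - π a|` (by convention `sInf ∅ = 0` if no bijection exists). -/
noncomputable def setEMD (A B : Finset ℕ) : ℕ :=
  sInf {t : ℕ | ∃ e : {x // x ∈ A} ≃ {y // y ∈ B},
    t = ∑ a ∈ A.attach, ((a.1 : ℤ) - ((e a).1 : ℤ)).natAbs}

/-- The support of column `j` of `Ω ⊆ {1,…,h} × {1,…,w}`. -/
def colSet (Ω : Finset (ℕ × ℕ)) (j : ℕ) : Finset ℕ :=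
  (Ω.filter (fun p => p.2 = j)).image Prod.fst

/-- `Ω` is a column-`s`-sparse support in the `h × w` grid: it lies in the grid and each of its
`w` columns has exactly `s` elements. -/
def colSparse (h w s : ℕ) (Ω : Finset (ℕ × ℕ)) : Prop :=
  Ω ⊆ Finset.Icc 1 h ×ˢ Finset.Icc 1 w ∧ ∀ j ∈ Finset.Icc 1 w, (colSet Ω j).card = s

/-- `EMD[Ω] = ∑_{j=1}^{w-1} EMD(Ω_j, Ω_{j+1})`. -/
noncomputable def suppEMD (w : ℕ) (Ω : Finset (ℕ × ℕ)) : ℕ :=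
  ∑ j ∈ Finset.Icc 1 (w - 1), setEMD (colSet Ω j) (colSet Ω (j + 1))

/-- The head value `Φ[Ω] = ∑_{(i,j) ∈ Ω} c i j`. -/
def headVal (c : ℕ → ℕ → ℝ) (Ω : Finset (ℕ × ℕ)) : ℝ :=
  ∑ p ∈ Ω, c p.1 p.2

/-!
Lagrangian relaxation. An optimal support `Ω*` with `EMD[Ω*] ≤ B` is a competitor for every
`λ`-relaxed maximizer `Ω_λ`, so `Φ[Ω_λ] ≥ OPT - λ B + λ EMD[Ω_λ]`.
If `r B ≥ OPT / 2`, then, with `k = ⌊EMD[Ω_r] / B⌋ ≥ 1` and `EMD[Ω_r] ≥ k B`, this gives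
`Φ[Ω_r] ≥ (k + 1) OPT / 2`, so `Ω'_r` reaches `OPT / 4`.
Otherwise `l B ≤ r B + (l - r) w h² < OPT / 2 + δ OPT`, so `Φ[Ω_l] ≥ (1/2 - δ) OPT`.
-/

section Lagrangian

variable {α : Type*} {S : Set α} {Φ E : α → ℝ} {t B : ℝ} {x y : α}

theorem sub_mul_add_mul_le_of_isMaxOn (hmax : IsMaxOn (fun z => Φ z - t * E z) S x)
    (ht : 0 ≤ t) (hy : y ∈ S) (hyB : E y ≤ B) : Φ y - t * B + t * E x ≤ Φ x := by
  have hxy : Φ y - t * E y ≤ Φ x - t * E x := isMaxOn_iff.1 hmax y hy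
  linarith [mul_le_mul_of_nonneg_left hyB ht]

theorem sub_mul_le_of_isMaxOn (hmax : IsMaxOn (fun z => Φ z - t * E z) S x)
    (ht : 0 ≤ t) (hE : 0 ≤ E x) (hy : y ∈ S) (hyB : E y ≤ B) : Φ y - t * B ≤ Φ x := by
  linarith [sub_mul_add_mul_le_of_isMaxOn hmax ht hy hyB, mul_nonneg ht hE]

end Lagrangian

theorem floor_div_mul_le_of_pos {B E : ℝ} (hB : 0 < B) (hE : 0 ≤ E) : ⌊E / B⌋₊ * B ≤ E :=
  (le_div_iff₀ hB).1 (Nat.floor_le (div_nonneg hE hB.le))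

theorem div_four_le_div_floor_add_one {Φ OPT r B E : ℝ} (hB : 0 < B) (hBE : B ≤ E)
    (hr : 0 ≤ r) (hOPT : OPT ≤ 2 * (r * B)) (hΦ : OPT - r * B + r * E ≤ Φ) :
    OPT / 4 ≤ Φ / (2 * (⌊E / B⌋₊ + 1)) := by
  have hk : (1 : ℝ) ≤ ⌊E / B⌋₊ := by
    exact_mod_cast (Nat.one_le_floor_iff _).2 ((one_le_div hB).2 hBE)
  set k : ℝ := (⌊E / B⌋₊ : ℝ)
  have hkB : k * B ≤ E := floor_div_mul_le_of_pos hB (hB.le.trans hBE)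
  have hΦk : (k + 1) * OPT / 2 ≤ Φ := calc
    (k + 1) * OPT / 2 = OPT + (k - 1) * (OPT / 2) := by ring
    _ ≤ OPT + (k - 1) * (r * B) := by
      gcongr
      linarith
    _ = OPT - r * B + r * (k * B) := by ring
    _ ≤ Φ := by linarith [mul_le_mul_of_nonneg_left hkB hr]
  rw [le_div_iff₀ (by positivity)]
  linarith

theorem headVal_nonneg {c : ℕ → ℕ → ℝ} (hc : ∀ i j, 0 ≤ c i j) (Ω : Finset (ℕ × ℕ)) :
    0 ≤ headVal c Ω :=
  Finset.sum_nonneg fun p _ => hc p.1 p.2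

theorem stmt15_general (h w s : ℕ)
    (c : ℕ → ℕ → ℝ) (hc : ∀ i j, 0 ≤ c i j)
    (B : ℝ) (hB0 : 0 < B) (hB1 : B ≤ (w : ℝ) * (h : ℝ) ^ 2)
    (δ : ℝ) (hδ0 : 0 < δ)
    (xmin : ℝ)
    (OPT : ℝ)
    (hOPT : IsGreatest {t : ℝ | ∃ Ω : Finset (ℕ × ℕ), colSparse h w s Ω ∧
      (suppEMD w Ω : ℝ) ≤ B ∧ t = headVal c Ω} OPT)
    (hOPTmin : xmin ≤ OPT)
    (l r : ℝ) (hr0 : 0 ≤ r) (hrl : r ≤ l)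
    (hlr : l - r ≤ δ * xmin / ((w : ℝ) * (h : ℝ) ^ 2))
    (Ωl : Finset (ℕ × ℕ))
    (hΩlmax : ∀ Ω : Finset (ℕ × ℕ), colSparse h w s Ω →
      headVal c Ω - l * (suppEMD w Ω : ℝ) ≤ headVal c Ωl - l * (suppEMD w Ωl : ℝ))
    (Ωr : Finset (ℕ × ℕ))
    (hΩrmax : ∀ Ω : Finset (ℕ × ℕ), colSparse h w s Ω →
      headVal c Ω - r * (suppEMD w Ω : ℝ) ≤ headVal c Ωr - r * (suppEMD w Ωr : ℝ))
    (hΩrB : B ≤ (suppEMD w Ωr : ℝ))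
    (Ωr' : Finset (ℕ × ℕ))
    (hΩr'head : headVal c Ωr /
      (2 * ((⌊(suppEMD w Ωr : ℝ) / B⌋₊ : ℝ) + 1)) ≤ headVal c Ωr') :
    (1 / 4 - δ) * OPT ≤ max (headVal c Ωr') (headVal c Ωl) := by
  obtain ⟨Ω, hΩ, hΩB, hOPTΩ⟩ := hOPT.1
  have hOPT0 : 0 ≤ OPT := hOPTΩ ▸ headVal_nonneg hc Ω
  have hδOPT : 0 ≤ δ * OPT := mul_nonneg hδ0.le hOPT0
  rcases le_or_gt OPT (2 * (r * B)) with hrB | hrB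
  · have hΦr : OPT - r * B + r * suppEMD w Ωr ≤ headVal c Ωr :=
      hOPTΩ ▸ sub_mul_add_mul_le_of_isMaxOn (isMaxOn_iff.2 hΩrmax) hr0 hΩ hΩB
    have := div_four_le_div_floor_add_one hB0 hΩrB hr0 hrB hΦr
    exact le_max_of_le_left (by linarith)
  · have hΦl : OPT - l * B ≤ headVal c Ωl :=
      hOPTΩ ▸ sub_mul_le_of_isMaxOn (isMaxOn_iff.2 hΩlmax) (hr0.trans hrl)
        (Nat.cast_nonneg _) hΩ hΩB
    have hlrB : (l - r) * B ≤ δ * OPT := calc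
      (l - r) * B ≤ (l - r) * ((w : ℝ) * (h : ℝ) ^ 2) :=
        mul_le_mul_of_nonneg_left hB1 (sub_nonneg.2 hrl)
      _ ≤ δ * xmin := (le_div_iff₀ (hB0.trans_le hB1)).1 hlr
      _ ≤ δ * OPT := mul_le_mul_of_nonneg_left hOPTmin hδ0.le
    exact le_max_of_le_right (by linarith)

/-- Assume `s ≤ h`, `0 < B ≤ w·h²`, `δ ∈ (0, 1/4)`, and let `xmin` be the
minimum positive weight.  Let `OPT` be the maximum of `Φ[Ω]` over column-`s`-sparse supports
with `EMD[Ω] ≤ B`, with `OPT ≥ xmin`.  Let `0 ≤ r ≤ l` with `l - r ≤ δ·xmin/(w·h²)`.  Suppose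
`Ωl` maximizes `Φ - l·EMD` with `EMD[Ωl] ≤ B`, `Ωr` maximizes `Φ - r·EMD` with `EMD[Ωr] ≥ B`,
and `Ω'r` (here `Ωr'`) is column-`s`-sparse with `EMD[Ω'r] ≤ B` and
`Φ[Ω'r] ≥ Φ[Ωr] / (2(⌊EMD[Ωr]/B⌋ + 1))`.  Then
`max {Φ[Ω'r], Φ[Ωl]} ≥ (1/4 - δ)·OPT`. -/
theorem stmt15 (h w s : ℕ) (hs1 : 1 ≤ s) (hsh : s ≤ h) (hw : 1 ≤ w)
    (c : ℕ → ℕ → ℝ) (hc : ∀ i j, 0 ≤ c i j)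
    (B : ℝ) (hB0 : 0 < B) (hB1 : B ≤ (w : ℝ) * (h : ℝ) ^ 2)
    (δ : ℝ) (hδ0 : 0 < δ) (hδ1 : δ < 1 / 4)
    (xmin : ℝ)
    (hxmin : IsLeast {t : ℝ | ∃ i ∈ Finset.Icc 1 h, ∃ j ∈ Finset.Icc 1 w,
      0 < c i j ∧ t = c i j} xmin)
    (OPT : ℝ)
    (hOPT : IsGreatest {t : ℝ | ∃ Ω : Finset (ℕ × ℕ), colSparse h w s Ω ∧
      (suppEMD w Ω : ℝ) ≤ B ∧ t = headVal c Ω} OPT)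
    (hOPTmin : xmin ≤ OPT)
    (l r : ℝ) (hr0 : 0 ≤ r) (hrl : r ≤ l)
    (hlr : l - r ≤ δ * xmin / ((w : ℝ) * (h : ℝ) ^ 2))
    (Ωl : Finset (ℕ × ℕ)) (hΩl : colSparse h w s Ωl)
    (hΩlmax : ∀ Ω : Finset (ℕ × ℕ), colSparse h w s Ω →
      headVal c Ω - l * (suppEMD w Ω : ℝ) ≤ headVal c Ωl - l * (suppEMD w Ωl : ℝ))
    (hΩlB : (suppEMD w Ωl : ℝ) ≤ B)
    (Ωr : Finset (ℕ × ℕ)) (hΩr : colSparse h w s Ωr)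
    (hΩrmax : ∀ Ω : Finset (ℕ × ℕ), colSparse h w s Ω →
      headVal c Ω - r * (suppEMD w Ω : ℝ) ≤ headVal c Ωr - r * (suppEMD w Ωr : ℝ))
    (hΩrB : B ≤ (suppEMD w Ωr : ℝ))
    (Ωr' : Finset (ℕ × ℕ)) (hΩr' : colSparse h w s Ωr')
    (hΩr'B : (suppEMD w Ωr' : ℝ) ≤ B)
    (hΩr'head : headVal c Ωr /
      (2 * ((⌊(suppEMD w Ωr : ℝ) / B⌋₊ : ℝ) + 1)) ≤ headVal c Ωr') :
    (1 / 4 - δ) * OPT ≤ max (headVal c Ωr') (headVal c Ωl) :=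
  stmt15_general h w s c hc B hB0 hB1 δ hδ0 xmin OPT hOPT hOPTmin l r hr0 hrl hlr Ωl hΩlmax Ωr
    hΩrmax hΩrB Ωr' hΩr'head
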